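/- In L²(0,∞), the smallest nearly invariant subspace for the adjoint shift semigroup {S(t)*} containing e_δ(ζ) = e^{−ζ}·χ_{(δ,∞)}(ζ) (δ > 0) is the closed span of {e_λ : 0 ≤ λ ≤ δ}, and this equals L²(0,δ) + ℂ·e^{−ζ}. -/

import Mathlib

/-
Put `R = L²(0, δ) + ℂ e^{-ζ}`, closed as the sum of a closed subspace and a line. Every `e_λ`
with `λ ≤ δ` agrees with `e^{-ζ}` beyond `δ`, so the closed span of the `e_λ` lies in `R`.
Conversely, if `u ⊥ e_λ` for all `λ ∈ [0, δ]` then `∫_λ^∞ e^{-ζ} u(ζ) dζ = 0` on `[0, δ]`, so `u`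
vanishes on `(0, δ]` and hence `u ⊥ R`. `R` is nearly invariant because `S(t) f ∈ R` forces `f`
to be a multiple of `e^{-ζ}` beyond `δ`, and it is the smallest such subspace containing `e_δ`
because `S(δ - λ) e_λ = e^{δ - λ} e_δ`.
-/

open MeasureTheory Complex Filter

noncomputable section

/-- Lebesgue measure on `(0, ∞)`. -/
def μz : Measure ℝ := volume.restrict (Set.Ioi (0 : ℝ))

/-- The space `L²(0, ∞)`. -/
abbrev L2z := MeasureTheory.Lp ℂ 2 μz

/-- `M` is nearly invariant for the adjoint shift semigroup `{S(t)^*}_{t ≥ 0}`: if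
`S(t) f ∈ M` for some `t > 0` then `f ∈ M`, where `(S(t) f)(ζ) = f(ζ - t)` for `ζ > t`
and `0` otherwise. -/
def NearlyShiftInv (M : Set L2z) : Prop :=
  ∀ f : L2z, ∀ t : ℝ, 0 < t →
    (∃ m ∈ M, (m : ℝ → ℂ) =ᵐ[μz] fun ζ : ℝ => if t < ζ then f (ζ - t) else 0) → f ∈ M

/-- `e_λ(ζ) = e^{-ζ} χ_((λ,∞))(ζ)`. -/
def eFun (lam : ℝ) : ℝ → ℂ := fun ζ : ℝ => if lam < ζ then Complex.exp (-(ζ : ℂ)) else 0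

/-- The closed span of `{e_λ : 0 ≤ λ ≤ δ}` in `L²(0, ∞)`. -/
def Espan (δ : ℝ) : Submodule ℂ L2z :=
  (Submodule.span ℂ {f : L2z | ∃ lam : ℝ, 0 ≤ lam ∧ lam ≤ δ ∧
    (f : ℝ → ℂ) =ᵐ[μz] eFun lam}).topologicalClosure

open Set
open scoped ENNReal

section IocIntegral

variable {E : Type*} [NormedAddCommGroup E] [NormedSpace ℝ E] [CompleteSpace E] {μ : Measure ℝ}
  {f : ℝ → E}

theorem ae_eq_zero_of_forall_setIntegral_Ioc_eq_zero (hf : Integrable f μ)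
    (h : ∀ a b, ∫ x in Ioc a b, f x ∂μ = 0) : f =ᵐ[μ] 0 := by
  have h_univ : ∫ x, f x ∂μ = 0 := by
    refine tendsto_nhds_unique (intervalIntegral_tendsto_integral hf
      (tendsto_neg_atTop_atBot.comp tendsto_natCast_atTop_atTop) tendsto_natCast_atTop_atTop) ?_
    refine tendsto_const_nhds.congr fun n => ?_
    rw [Function.comp_apply, intervalIntegral.integral_of_le (by simp), h]
  suffices ∀ s, MeasurableSet s → ∫ x in s, f x ∂μ = 0 from
    hf.ae_eq_zero_of_forall_setIntegral_eq_zero fun s hs _ => this s hs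
  intro s hs
  induction s, hs using MeasurableSpace.induction_on_inter
    (borel_eq_generateFrom_Ioc ℝ) (isPiSystem_Ioc id id) with
  | empty => simp
  | basic s hs =>
    obtain ⟨a, b, -, rfl⟩ := hs
    exact h a b
  | compl s hs ih => rw [setIntegral_compl hs hf, ih, h_univ, sub_zero]
  | iUnion s hd hm ih => simp [integral_iUnion hm hd hf.integrableOn, ih]

theorem ae_restrict_Ioc_eq_zero_of_setIntegral_Ioi_eq_zero {a b : ℝ}
    (hf : IntegrableOn f (Ioi a) μ) (h : ∀ c ∈ Icc a b, ∫ x in Ioi c, f x ∂μ = 0) :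
    ∀ᵐ x ∂μ.restrict (Ioc a b), f x = 0 := by
  refine ae_eq_zero_of_forall_setIntegral_Ioc_eq_zero (hf.mono_set Ioc_subset_Ioi_self)
    fun l u => ?_
  rw [Measure.restrict_restrict measurableSet_Ioc, Ioc_inter_Ioc]
  set l' := max l a
  set u' := min u b
  rcases le_total u' l' with hul | hlu
  · simp [Ioc_eq_empty hul.not_gt]
  have hl' : a ≤ l' := le_max_right _ _
  have hu' : u' ≤ b := min_le_right _ _
  rw [← intervalIntegral.integral_of_le hlu,
    ← intervalIntegral.integral_Ioi_sub_Ioi (hf.mono_set (Ioi_subset_Ioi hl')) hlu,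
    h l' ⟨hl', hlu.trans hu'⟩, h u' ⟨hl'.trans hlu, hu'⟩, sub_zero]

end IocIntegral

namespace MeasureTheory.Lp

variable {α : Type*} [MeasurableSpace α] (𝕜 : Type*) [RCLike 𝕜] {E : Type*} [NormedAddCommGroup E]

def vanishingOn [NormedSpace 𝕜 E] (μ : Measure α) (p : ℝ≥0∞) [Fact (1 ≤ p)] (s : Set α) :
    Submodule 𝕜 (Lp E p μ) :=
  (LpToLpRestrictCLM α E 𝕜 μ p s).ker

variable {μ : Measure α} {s : Set α}

section

variable [NormedSpace 𝕜 E] {p : ℝ≥0∞} [Fact (1 ≤ p)]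

theorem mem_vanishingOn_iff (hs : MeasurableSet s) (f : Lp E p μ) :
    f ∈ vanishingOn 𝕜 μ p s ↔ ∀ᵐ x ∂μ, x ∈ s → f x = 0 := by
  rw [vanishingOn, LinearMap.mem_ker, ← ae_restrict_iff' hs, Lp.eq_zero_iff_ae_eq_zero]
  exact (LpToLpRestrictCLM_coeFn 𝕜 s f).congr_left

theorem isClosed_vanishingOn : IsClosed (vanishingOn (E := E) 𝕜 μ p s : Set (Lp E p μ)) :=
  ContinuousLinearMap.isClosed_ker _

end

variable {𝕜}

theorem inner_eq_zero_of_mem_vanishingOn [InnerProductSpace 𝕜 E] (hs : MeasurableSet s)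
    {f g : Lp E 2 μ} (hf : f ∈ vanishingOn 𝕜 μ 2 s) (hg : g ∈ vanishingOn 𝕜 μ 2 sᶜ) :
    inner 𝕜 f g = 0 := by
  rw [mem_vanishingOn_iff 𝕜 hs] at hf
  rw [mem_vanishingOn_iff 𝕜 hs.compl] at hg
  rw [L2.inner_def, ← integral_zero α 𝕜]
  refine integral_congr_ae ?_
  filter_upwards [hf, hg] with x hfx hgx
  by_cases hx : x ∈ s
  · simp [hfx hx]
  · simp [hgx hx]

end MeasureTheory.Lp

theorem measurable_eFun (lam : ℝ) : Measurable (eFun lam) :=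
  Measurable.ite measurableSet_Ioi (by fun_prop) measurable_const

theorem memLp_eFun (lam : ℝ) : MemLp (eFun lam) 2 μz := by
  rw [memLp_two_iff_integrable_sq_norm (measurable_eFun lam).aestronglyMeasurable]
  refine (exp_neg_integrableOn_Ioi 0 two_pos).mono'
    ((measurable_eFun lam).norm.pow_const 2).aestronglyMeasurable (ae_of_all _ fun ζ => ?_)
  unfold eFun
  split_ifs
  · simp [Complex.norm_exp, ← Real.exp_nat_mul]
  · simp [Real.exp_nonneg]

def eL2 (lam : ℝ) : L2z := (memLp_eFun lam).toLp (eFun lam)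

theorem coeFn_eL2 (lam : ℝ) : (eL2 lam : ℝ → ℂ) =ᵐ[μz] eFun lam :=
  (memLp_eFun lam).coeFn_toLp

theorem μz_restrict_Ioi {lam : ℝ} (hlam : 0 ≤ lam) :
    μz.restrict (Ioi lam) = volume.restrict (Ioi lam) := by
  rw [μz, Measure.restrict_restrict measurableSet_Ioi, Ioi_inter_Ioi, sup_of_le_left hlam]

theorem ae_μz_iff {p : ℝ → Prop} : (∀ᵐ ζ ∂μz, p ζ) ↔ ∀ᵐ ζ, 0 < ζ → p ζ :=
  ae_restrict_iff' measurableSet_Ioi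

theorem ae_pos_μz : ∀ᵐ ζ ∂μz, 0 < ζ := ae_restrict_mem measurableSet_Ioi

theorem coeFn_eL2_zero : (eL2 0 : ℝ → ℂ) =ᵐ[μz] fun ζ => Complex.exp (-(ζ : ℂ)) := by
  filter_upwards [coeFn_eL2 0, ae_pos_μz] with ζ he hζ
  simp [he, eFun, hζ]

theorem ae_add_right_of_ae {t : ℝ} (ht : 0 ≤ t) {p : ℝ → Prop} (h : ∀ᵐ ζ ∂μz, p ζ) :
    ∀ᵐ ζ ∂μz, p (ζ + t) := by
  have hmp := (measurePreserving_add_right volume t).restrict_preimage (measurableSet_Ioi (a := 0))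
  exact ae_restrict_of_ae_restrict_of_subset (fun ζ (hζ : 0 < ζ) => show 0 < ζ + t by linarith)
    (hmp.quasiMeasurePreserving.ae h)

theorem ae_sub_right_of_ae (t : ℝ) {p : ℝ → Prop} (h : ∀ᵐ ζ ∂μz, p ζ) :
    ∀ᵐ ζ ∂μz, t < ζ → p (ζ - t) := by
  have hmp := (measurePreserving_sub_right volume t).restrict_preimage (measurableSet_Ioi (a := 0))
  have hpre : (· - t) ⁻¹' Ioi 0 = Ioi t := by ext; simp
  rw [hpre] at hmp
  exact ae_restrict_of_ae ((ae_restrict_iff' measurableSet_Ioi).1 (hmp.quasiMeasurePreserving.ae h))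

theorem eFun_sub (lam t ζ : ℝ) :
    eFun lam (ζ - t) = Complex.exp t * eFun (lam + t) ζ := by
  simp only [eFun, lt_sub_iff_add_lt]
  split_ifs
  · rw [← Complex.exp_add]; push_cast; ring_nf
  · simp

/-- `L²(0, δ) + ℂ e^{-ζ}`. -/
def L2IocSupExp (δ : ℝ) : Submodule ℂ L2z := Lp.vanishingOn ℂ μz 2 (Ioi δ) ⊔ ℂ ∙ eL2 0

theorem coeFn_sub_smul_eL2_zero (f : L2z) (c : ℂ) :
    ((f - c • eL2 0 : L2z) : ℝ → ℂ) =ᵐ[μz] fun ζ => f ζ - c * Complex.exp (-(ζ : ℂ)) := by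
  filter_upwards [Lp.coeFn_sub f (c • eL2 0), Lp.coeFn_smul c (eL2 0), coeFn_eL2_zero]
    with ζ hsub hsmul he
  rw [hsub, Pi.sub_apply, hsmul, Pi.smul_apply, he, smul_eq_mul]

theorem mem_L2IocSupExp_iff {δ : ℝ} (f : L2z) :
    f ∈ L2IocSupExp δ ↔ ∃ c : ℂ, ∀ᵐ ζ ∂μz, δ < ζ → f ζ = c * Complex.exp (-(ζ : ℂ)) := by
  have h_sub_mem (c : ℂ) : f - c • eL2 0 ∈ Lp.vanishingOn ℂ μz 2 (Ioi δ) ↔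
      ∀ᵐ ζ ∂μz, δ < ζ → f ζ = c * Complex.exp (-(ζ : ℂ)) := by
    rw [Lp.mem_vanishingOn_iff ℂ measurableSet_Ioi]
    refine eventually_congr ((coeFn_sub_smul_eL2_zero f c).mono fun ζ h => ?_)
    rw [h, mem_Ioi, sub_eq_zero]
  simp_rw [← h_sub_mem]
  constructor
  · intro hf
    obtain ⟨g, hg, _, hs, rfl⟩ := Submodule.mem_sup.1 hf
    obtain ⟨c, rfl⟩ := Submodule.mem_span_singleton.1 hs
    exact ⟨c, by rwa [add_sub_cancel_right]⟩
  · rintro ⟨c, hc⟩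
    exact Submodule.mem_sup.2 ⟨_, hc, c • eL2 0, Submodule.mem_span_singleton.2 ⟨c, rfl⟩,
      sub_add_cancel _ _⟩

theorem mem_L2IocSupExp_iff_exists_add {δ : ℝ} (f : L2z) :
    f ∈ L2IocSupExp δ ↔ ∃ g : L2z, ∃ c : ℂ, (∀ᵐ ζ ∂μz, δ < ζ → g ζ = 0) ∧
      ∀ᵐ ζ ∂μz, f ζ = g ζ + c * Complex.exp (-(ζ : ℂ)) := by
  rw [mem_L2IocSupExp_iff]
  constructor
  · rintro ⟨c, hc⟩
    refine ⟨f - c • eL2 0, c, ?_, ?_⟩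
    · filter_upwards [coeFn_sub_smul_eL2_zero f c, hc] with ζ hg hf hζ
      rw [hg, hf hζ, sub_self]
    · filter_upwards [coeFn_sub_smul_eL2_zero f c] with ζ hg
      rw [hg, sub_add_cancel]
  · rintro ⟨g, c, hg, hf⟩
    refine ⟨c, ?_⟩
    filter_upwards [hg, hf] with ζ hg hf hζ
    rw [hf, hg hζ, zero_add]

theorem isClosed_L2IocSupExp (δ : ℝ) : IsClosed (L2IocSupExp δ : Set L2z) :=
  Submodule.isClosed_sup_finiteDimensional _ _ (Lp.isClosed_vanishingOn ℂ)

theorem nearlyShiftInv_L2IocSupExp (δ : ℝ) : NearlyShiftInv (L2IocSupExp δ : Set L2z) := by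
  rintro f t ht ⟨m, hm, hmf⟩
  obtain ⟨c, hc⟩ := (mem_L2IocSupExp_iff m).1 hm
  refine (mem_L2IocSupExp_iff f).2 ⟨c * Complex.exp (-(t : ℂ)), ?_⟩
  filter_upwards [ae_add_right_of_ae ht.le (hmf.and hc), ae_pos_μz] with η ⟨hmf, hc⟩ hη hδη
  rw [hmf, if_pos (by linarith), add_sub_cancel_right] at hc
  rw [hc (by linarith)]
  push_cast
  rw [neg_add, Complex.exp_add]
  ring

theorem Espan_le_of_nearlyShiftInv {δ : ℝ} {M : Submodule ℂ L2z} (hM : IsClosed (M : Set L2z))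
    (hinv : NearlyShiftInv (M : Set L2z)) {e : L2z} (he : e ∈ M)
    (he_eq : (e : ℝ → ℂ) =ᵐ[μz] eFun δ) : Espan δ ≤ M := by
  refine Submodule.topologicalClosure_minimal _ (Submodule.span_le.2 ?_) hM
  rintro f ⟨lam, hlam, hlamδ, hf⟩
  rcases hlamδ.eq_or_lt with rfl | hlt
  · rwa [Lp.ext (hf.trans he_eq.symm)]
  refine hinv f (δ - lam) (sub_pos.2 hlt) ⟨Complex.exp ↑(δ - lam) • e, M.smul_mem _ he, ?_⟩
  filter_upwards [Lp.coeFn_smul (Complex.exp ↑(δ - lam)) e, he_eq, ae_sub_right_of_ae _ hf]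
    with ζ hsmul he hf
  rw [hsmul, Pi.smul_apply, he, smul_eq_mul]
  split_ifs with hζ
  · rw [hf hζ, eFun_sub, add_sub_cancel]
  · simp [eFun, (not_lt.1 hζ).trans (sub_le_self _ hlam)]

theorem Espan_le_L2IocSupExp (δ : ℝ) : Espan δ ≤ L2IocSupExp δ := by
  refine Submodule.topologicalClosure_minimal _ (Submodule.span_le.2 ?_) (isClosed_L2IocSupExp δ)
  rintro f ⟨lam, -, hlam, hf⟩
  exact (mem_L2IocSupExp_iff f).2
    ⟨1, hf.mono fun ζ hf hζ => by simp [hf, eFun, hlam.trans_lt hζ]⟩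

theorem inner_eL2 {lam : ℝ} (hlam : 0 ≤ lam) (u : L2z) :
    inner ℂ (eL2 lam) u = ∫ ζ in Ioi lam, Complex.exp (-(ζ : ℂ)) * u ζ := by
  rw [L2.inner_def, ← μz_restrict_Ioi hlam, ← integral_indicator measurableSet_Ioi]
  refine integral_congr_ae ?_
  filter_upwards [coeFn_eL2 lam] with ζ he
  by_cases hζ : lam < ζ
  · simp [he, eFun, hζ, ← Complex.exp_conj, mul_comm]
  · simp [he, eFun, hζ]

theorem mem_vanishingOn_Iic_of_forall_inner_eL2_eq_zero {δ : ℝ} {u : L2z}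
    (hu : ∀ lam ∈ Icc 0 δ, inner ℂ (eL2 lam) u = 0) : u ∈ Lp.vanishingOn ℂ μz 2 (Iic δ) := by
  have hint : IntegrableOn (fun ζ : ℝ => Complex.exp (-(ζ : ℂ)) * u ζ) (Ioi 0) := by
    refine (L2.integrable_inner (𝕜 := ℂ) (eL2 0) u).congr ?_
    filter_upwards [coeFn_eL2_zero] with ζ he
    rw [RCLike.inner_apply, he, ← Complex.exp_conj]
    simp [mul_comm]
  have h_zero := ae_restrict_Ioc_eq_zero_of_setIntegral_Ioi_eq_zero hint
    fun lam hlam => (inner_eL2 hlam.1 u).symm.trans (hu lam hlam)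
  rw [Lp.mem_vanishingOn_iff ℂ measurableSet_Iic, ae_μz_iff]
  rw [ae_restrict_iff' measurableSet_Ioc] at h_zero
  filter_upwards [h_zero] with ζ h hζ0 hζδ
  simpa [Complex.exp_ne_zero] using h ⟨hζ0, hζδ⟩

theorem L2IocSupExp_le_Espan {δ : ℝ} (hδ : 0 ≤ δ) : L2IocSupExp δ ≤ Espan δ := by
  rw [Espan, ← Submodule.orthogonal_orthogonal_eq_closure]
  set S := Submodule.span ℂ {f : L2z | ∃ lam : ℝ, 0 ≤ lam ∧ lam ≤ δ ∧
    (f : ℝ → ℂ) =ᵐ[μz] eFun lam}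
  have h_mem (lam : ℝ) (hlam : lam ∈ Icc 0 δ) : eL2 lam ∈ S :=
    Submodule.subset_span ⟨lam, hlam.1, hlam.2, coeFn_eL2 lam⟩
  refine sup_le (fun g hg => (Submodule.mem_orthogonal _ _).2 fun u hu => ?_)
    ((Submodule.span_singleton_le_iff_mem _ _).2
      (S.le_orthogonal_orthogonal (h_mem 0 ⟨le_rfl, hδ⟩)))
  have hu_vanish : u ∈ Lp.vanishingOn ℂ μz 2 (Iic δ) :=
    mem_vanishingOn_Iic_of_forall_inner_eL2_eq_zero fun lam hlam =>
      S.inner_right_of_mem_orthogonal (h_mem lam hlam) hu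
  exact Lp.inner_eq_zero_of_mem_vanishingOn measurableSet_Iic hu_vanish (by rwa [compl_Iic])

theorem Espan_eq_L2IocSupExp {δ : ℝ} (hδ : 0 ≤ δ) : Espan δ = L2IocSupExp δ :=
  (Espan_le_L2IocSupExp δ).antisymm (L2IocSupExp_le_Espan hδ)

/-- The smallest nearly `{S(t)^*}`-invariant subspace of `L²(0,∞)`
containing `e_δ` is the closed span of `{e_λ : 0 ≤ λ ≤ δ}`, which equals
`L²(0,δ) + ℂ e^{-ζ}`. -/
theorem cyclic_stmt11 (δ : ℝ) (hδ : 0 < δ) :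
    NearlyShiftInv (Espan δ : Set L2z) ∧
    (∃ e ∈ Espan δ, (e : ℝ → ℂ) =ᵐ[μz] eFun δ) ∧
    (∀ M : Submodule ℂ L2z, IsClosed (M : Set L2z) → NearlyShiftInv (M : Set L2z) →
      (∃ e ∈ M, (e : ℝ → ℂ) =ᵐ[μz] eFun δ) → Espan δ ≤ M) ∧
    (Espan δ : Set L2z) = {f : L2z | ∃ g : L2z, ∃ c : ℂ,
      (∀ᵐ ζ ∂μz, δ < ζ → g ζ = 0) ∧
      (∀ᵐ ζ ∂μz, f ζ = g ζ + c * Complex.exp (-(ζ : ℂ)))} := by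
  have h_eq := Espan_eq_L2IocSupExp hδ.le
  refine ⟨h_eq ▸ nearlyShiftInv_L2IocSupExp δ, ?_, ?_, ?_⟩
  · exact ⟨eL2 δ, Submodule.le_topologicalClosure _
      (Submodule.subset_span ⟨δ, hδ.le, le_rfl, coeFn_eL2 δ⟩), coeFn_eL2 δ⟩
  · rintro M hM hinv ⟨e, he, he_eq⟩
    exact Espan_le_of_nearlyShiftInv hM hinv he he_eq
  · ext f
    rw [SetLike.mem_coe, h_eq]
    exact mem_L2IocSupExp_iff_exists_add f
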